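/- Let k be a field of characteristic zero, let A and B be symmetrizable generalized Cartan matrices indexed by finite sets Y and X respectively, and let f : X → Y be a surjection such that for all y, y' ∈ Y and every x' ∈ f⁻¹(y'), A y y' = Σ_{x ∈ f⁻¹(y)} B x x'. Then in the Lie algebra Matrix.ToLieAlgebra B k, for all y ≠ y' in Y the elements Ẽ_y = Σ_{x ∈ f⁻¹(y)} E_x and F̃_y = Σ_{x ∈ f⁻¹(y)} F_x satisfy the Serre relations ad(Ẽ_y)^{1 − A y y'}(Ẽ_{y'}) = 0 and ad(F̃_y)^{1 − A y y'}(F̃_{y'}) = 0. -/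

import Mathlib

/-!
Taking `y = y'` in the compatibility condition gives `2 = 2 + ∑ B x x'` over `x ≠ x'` in one
fibre, and these entries are `≤ 0`, so they vanish: the `E x` (and the `F x`) of one fibre
pairwise commute. Hence `ad Ẽ_y` is a sum of commuting operators `ad E x`, each killing `E x'`
after `1 - B x x'` steps, and the binomial expansion of `(∑ ad E x) ^ N` kills `E x'` as soon
as `N ≥ 1 + ∑ (-B x x') = 1 - A y y'`.
-/

open Finset

/-- `A` is a generalized Cartan matrix: `A s s = 2`, off-diagonal entries are nonpositive,
and `A s t = 0 ↔ A t s = 0`. -/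
def IsGCM {S : Type*} (A : Matrix S S ℤ) : Prop :=
  (∀ s, A s s = 2) ∧ (∀ s t, s ≠ t → A s t ≤ 0) ∧ (∀ s t, A s t = 0 ↔ A t s = 0)

/-- `A` is symmetrizable: there are positive rationals `d s` with `d s · A s t = d t · A t s`. -/
def IsSymmetrizable {S : Type*} (A : Matrix S S ℤ) : Prop :=
  ∃ d : S → ℚ, (∀ s, 0 < d s) ∧ ∀ s t, d s * A s t = d t * A t s

variable (R : Type*) [CommRing R]

/-- The generator `E b` of `Matrix.ToLieAlgebra R A`. -/
noncomputable def genE {B : Type*} [DecidableEq B] (A : Matrix B B ℤ) (b : B) :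
    Matrix.ToLieAlgebra R A :=
  LieSubmodule.Quotient.mk (N := CartanMatrix.Relations.toIdeal R A)
    (FreeLieAlgebra.of R (CartanMatrix.Generators.E b))

/-- The generator `F b` of `Matrix.ToLieAlgebra R A`. -/
noncomputable def genF {B : Type*} [DecidableEq B] (A : Matrix B B ℤ) (b : B) :
    Matrix.ToLieAlgebra R A :=
  LieSubmodule.Quotient.mk (N := CartanMatrix.Relations.toIdeal R A)
    (FreeLieAlgebra.of R (CartanMatrix.Generators.F b))

lemma pow_smul_eq_zero_of_le {A M : Type*} [Monoid A] [AddMonoid M] [DistribMulAction A M]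
    {a : A} {v : M} {m n : ℕ} (ha : a ^ m • v = 0) (hmn : m ≤ n) : a ^ n • v = 0 := by
  rw [← Nat.sub_add_cancel hmn, pow_add, mul_smul, ha, smul_zero]

theorem Commute.add_pow_smul_eq_zero {A M : Type*} [Semiring A] [AddCommMonoid M] [Module A M]
    {a b : A} (hab : Commute a b) {v : M} {m n : ℕ}
    (ha : a ^ (m + 1) • v = 0) (hb : b ^ (n + 1) • v = 0) :
    (a + b) ^ (m + n + 1) • v = 0 := by
  rw [hab.add_pow', sum_smul]
  refine sum_eq_zero fun ⟨i, j⟩ hij => ?_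
  rw [HasAntidiagonal.mem_antidiagonal] at hij
  rw [smul_assoc]
  by_cases hi : m + 1 ≤ i
  · rw [(hab.pow_pow i j).eq, mul_smul, pow_smul_eq_zero_of_le ha hi, smul_zero, smul_zero]
  · rw [mul_smul, pow_smul_eq_zero_of_le hb (by omega), smul_zero, smul_zero]

theorem Commute.sum_pow_smul_eq_zero {A M ι : Type*} [Semiring A] [AddCommMonoid M]
    [Module A M] {s : Finset ι} {a : ι → A} {v : M} {m : ι → ℕ}
    (ha : ∀ i ∈ s, a i ^ (m i + 1) • v = 0)
    (hcomm : ∀ i j, i ∈ s → j ∈ s → Commute (a i) (a j)) :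
    (∑ i ∈ s, a i) ^ (∑ i ∈ s, m i + 1) • v = 0 := by
  classical
  induction s using Finset.induction_on with
  | empty => simp
  | insert j s hj ih =>
    rw [sum_insert hj, sum_insert hj, add_assoc]
    refine Commute.add_pow_smul_eq_zero ?_ (ha j (by simp))
      (ih (fun i hi => ha i (by simp [hi]))
        fun i i' hi hi' => hcomm i i' (by simp [hi]) (by simp [hi']))
    exact Commute.sum_right _ _ _ fun i hi => hcomm _ _ (by simp) (by simp [hi])

attribute [local instance 100] LieRing.ofAssociativeRing in
theorem LieAlgebra.ad_sum_pow_apply_eq_zero {R L ι : Type*} [CommRing R] [LieRing L]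
    [LieAlgebra R L] {s : Finset ι} {e : ι → L} {v : L} {m : ι → ℕ}
    (he : ∀ i ∈ s, (ad R L (e i) ^ (m i + 1)) v = 0)
    (hcomm : ∀ i j, i ∈ s → j ∈ s → ⁅e i, e j⁆ = 0) :
    (ad R L (∑ i ∈ s, e i) ^ (∑ i ∈ s, m i + 1)) v = 0 := by
  rw [map_sum, ← Module.End.smul_def]
  refine Commute.sum_pow_smul_eq_zero he fun i j hi hj => ?_
  rw [commute_iff_lie_eq, ← LieHom.map_lie, hcomm i j hi hj, map_zero]

lemma LieSubmodule.Quotient.ad_pow_mk_apply_mk {R L : Type*} [CommRing R] [LieRing L]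
    [LieAlgebra R L] {I : LieIdeal R L} (a b : L) (n : ℕ) :
    (LieAlgebra.ad R (L ⧸ I) (mk a) ^ n) (mk b) = mk ((LieAlgebra.ad R L a ^ n) b) :=
  LieModule.toEnd_pow_apply_map (mk' I) n a b

lemma LieSubmodule.Quotient.ad_pow_succ_mk_apply_mk_eq_zero {R L : Type*} [CommRing R]
    [LieRing L] [LieAlgebra R L] {I : LieIdeal R L} {a b : L} {n : ℕ}
    (h : (LieAlgebra.ad R L a ^ n) ⁅a, b⁆ ∈ I) :
    (LieAlgebra.ad R (L ⧸ I) (mk a) ^ (n + 1)) (mk b) = 0 := by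
  rw [pow_succ, Module.End.mul_apply, LieAlgebra.ad_apply, ← mk_bracket, ad_pow_mk_apply_mk,
    mk_eq_zero']
  exact h

lemma Int.toNat_one_sub_sum_of_nonpos {ι : Type*} {s : Finset ι} {g : ι → ℤ}
    (hg : ∀ i ∈ s, g i ≤ 0) : (1 - ∑ i ∈ s, g i).toNat = ∑ i ∈ s, (-g i).toNat + 1 := by
  have h : ((∑ i ∈ s, (-g i).toNat : ℕ) : ℤ) = -∑ i ∈ s, g i := by
    rw [Nat.cast_sum, ← sum_neg_distrib]
    exact sum_congr rfl fun i hi => Int.toNat_of_nonneg (by linarith [hg i hi])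
  omega

lemma Matrix.apply_eq_zero_of_sum_col_eq_diag {X : Type*} {B : Matrix X X ℤ} {s : Finset X}
    {z : X} (hz : z ∈ s) (hB : ∀ x ∈ s, x ≠ z → B x z ≤ 0) (hsum : ∑ x ∈ s, B x z = B z z)
    {x : X} (hx : x ∈ s) (hxz : x ≠ z) : B x z = 0 := by
  classical
  rw [← sum_erase_add _ _ hz, add_eq_right] at hsum
  have hnonpos : ∀ i ∈ s.erase z, B i z ≤ 0 := fun i hi =>
    hB i (mem_of_mem_erase hi) (ne_of_mem_erase hi)
  exact (sum_eq_zero_iff_of_nonpos hnonpos).1 hsum x (mem_erase.2 ⟨hxz, hx⟩)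

theorem LieAlgebra.ad_sum_pow_apply_sum_eq_zero_of_serre {R L X : Type*} [CommRing R]
    [LieRing L] [LieAlgebra R L] {B : Matrix X X ℤ} {e : X → L}
    (he : ∀ x z, (ad R L (e x) ^ ((-B x z).toNat + 1)) (e z) = 0) {s s' : Finset X} {a : ℤ}
    (hs : ∀ x ∈ s, ∀ z ∈ s, x ≠ z → B x z = 0) (hss' : ∀ x ∈ s, ∀ x' ∈ s', B x x' ≤ 0)
    (ha : ∀ x' ∈ s', a = ∑ x ∈ s, B x x') :
    (ad R L (∑ x ∈ s, e x) ^ (1 - a).toNat) (∑ x' ∈ s', e x') = 0 := by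
  rw [map_sum]
  refine sum_eq_zero fun x' hx' => ?_
  rw [ha x' hx', Int.toNat_one_sub_sum_of_nonpos fun x hx => hss' x hx x' hx']
  refine ad_sum_pow_apply_eq_zero (fun x _ => he x x') fun x z hx hz => ?_
  obtain rfl | hxz := eq_or_ne x z
  · exact lie_self _
  · simpa [hs x hx z hz hxz] using he x z

lemma genE_ad_pow_apply_genE {X : Type*} [DecidableEq X] (B : Matrix X X ℤ) (x z : X) :
    (LieAlgebra.ad R _ (genE R B x) ^ ((-B x z).toNat + 1)) (genE R B z) = 0 :=
  LieSubmodule.Quotient.ad_pow_succ_mk_apply_mk_eq_zero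
    (LieSubmodule.subset_lieSpan (Or.inl (Or.inr ⟨(x, z), rfl⟩)))

lemma genF_ad_pow_apply_genF {X : Type*} [DecidableEq X] (B : Matrix X X ℤ) (x z : X) :
    (LieAlgebra.ad R _ (genF R B x) ^ ((-B x z).toNat + 1)) (genF R B z) = 0 :=
  LieSubmodule.Quotient.ad_pow_succ_mk_apply_mk_eq_zero
    (LieSubmodule.subset_lieSpan (Or.inr ⟨(x, z), rfl⟩))

theorem furling_serre_relations_general (k : Type*) [Field k]
    {Y X : Type*} [Fintype X] [DecidableEq Y] [DecidableEq X]
    (A : Matrix Y Y ℤ) (B : Matrix X X ℤ)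
    (hA : IsGCM A) (hB : IsGCM B)
    (f : X → Y)
    (hcompat : ∀ y y' : Y, ∀ x' : X, f x' = y' →
      A y y' = ∑ x ∈ univ.filter (fun x => f x = y), B x x') :
    ∀ y y' : Y, y ≠ y' →
      ((LieAlgebra.ad k (Matrix.ToLieAlgebra k B)
          (∑ x ∈ univ.filter (fun x => f x = y), genE k B x)) ^ (1 - A y y').toNat)
        (∑ x' ∈ univ.filter (fun x' => f x' = y'), genE k B x') = 0 ∧
      ((LieAlgebra.ad k (Matrix.ToLieAlgebra k B)
          (∑ x ∈ univ.filter (fun x => f x = y), genF k B x)) ^ (1 - A y y').toNat)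
        (∑ x' ∈ univ.filter (fun x' => f x' = y'), genF k B x') = 0 := by
  intro y y' hyy'
  have hfiber :
      ∀ x ∈ univ.filter (f · = y), ∀ z ∈ univ.filter (f · = y), x ≠ z → B x z = 0 := by
    intro x hx z hz hxz
    simp only [mem_filter, mem_univ, true_and] at hx hz
    refine Matrix.apply_eq_zero_of_sum_col_eq_diag (s := univ.filter (f · = f z)) (by simp)
      (fun w _ hwz => hB.2.1 w z hwz) ?_ (by simp [hx, hz]) hxz
    rw [← hcompat _ _ z rfl, hA.1, hB.1]
  have hoff : ∀ x ∈ univ.filter (f · = y), ∀ x' ∈ univ.filter (f · = y'), B x x' ≤ 0 := by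
    intro x hx x' hx'
    simp only [mem_filter, mem_univ, true_and] at hx hx'
    exact hB.2.1 x x' fun h => hyy' (hx ▸ hx' ▸ congrArg f h)
  have hsum :
      ∀ x' ∈ univ.filter (f · = y'), A y y' = ∑ x ∈ univ.filter (f · = y), B x x' :=
    fun x' hx' => hcompat y y' x' (mem_filter.1 hx').2
  constructor
  · exact LieAlgebra.ad_sum_pow_apply_sum_eq_zero_of_serre (genE_ad_pow_apply_genE k B)
      hfiber hoff hsum
  · exact LieAlgebra.ad_sum_pow_apply_sum_eq_zero_of_serre (genF_ad_pow_apply_genF k B)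
      hfiber hoff hsum

/-- Let `k` be a field of characteristic zero, let `A` and `B` be
symmetrizable generalized Cartan matrices indexed by finite sets `Y` and `X` respectively, and
let `f : X → Y` be a surjection such that for all `y, y' ∈ Y` and every `x' ∈ f⁻¹(y')`,
`A y y' = Σ_{x ∈ f⁻¹(y)} B x x'`.  Then in the Lie algebra `Matrix.ToLieAlgebra B k`, for all
`y ≠ y'` in `Y` the elements `Ẽ_y = Σ_{x ∈ f⁻¹(y)} E_x` and `F̃_y = Σ_{x ∈ f⁻¹(y)} F_x`
satisfy the Serre relations `ad(Ẽ_y)^(1 − A y y')(Ẽ_{y'}) = 0` and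
`ad(F̃_y)^(1 − A y y')(F̃_{y'}) = 0`. -/
theorem furling_serre_relations (k : Type*) [Field k] [CharZero k]
    {Y X : Type*} [Fintype Y] [Fintype X] [DecidableEq Y] [DecidableEq X]
    (A : Matrix Y Y ℤ) (B : Matrix X X ℤ)
    (hA : IsGCM A) (hB : IsGCM B) (hAsym : IsSymmetrizable A) (hBsym : IsSymmetrizable B)
    (f : X → Y) (hf : Function.Surjective f)
    (hcompat : ∀ y y' : Y, ∀ x' : X, f x' = y' →
      A y y' = ∑ x ∈ univ.filter (fun x => f x = y), B x x') :
    ∀ y y' : Y, y ≠ y' →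
      ((LieAlgebra.ad k (Matrix.ToLieAlgebra k B)
          (∑ x ∈ univ.filter (fun x => f x = y), genE k B x)) ^ (1 - A y y').toNat)
        (∑ x' ∈ univ.filter (fun x' => f x' = y'), genE k B x') = 0 ∧
      ((LieAlgebra.ad k (Matrix.ToLieAlgebra k B)
          (∑ x ∈ univ.filter (fun x => f x = y), genF k B x)) ^ (1 - A y y').toNat)
        (∑ x' ∈ univ.filter (fun x' => f x' = y'), genF k B x') = 0 :=
  furling_serre_relations_general k A B hA hB f hcompat
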